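/- Let K be an algebraically closed field of characteristic 0, and let P(z) ∈ K[z] be a nonzero polynomial with distinct roots λ₁,…,λ_n (all nonzero) of multiplicities m₁,…,m_n. A formal distribution a(z) ∈ K[[z,z⁻¹]] satisfies P(z)·a(z) = 0 if and only if a(z) = Σ_{i=1}^{n} Σ_{p=0}^{m_i - 1} α_{i,p} · δ^{(p)}(z/λ_i) for some scalars α_{i,p} ∈ K, where δ(z) = Σ_{m∈ℤ} z^m. -/

import Mathlib

open Polynomial Finset

/-- The formal derivative on formal distributions in `K[[z,z⁻¹]]`. -/
def Dop {K : Type*} [Ring K] (f : ℤ → K) : ℤ → K := fun m => ((m + 1 : ℤ) : K) * f (m + 1)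

section Infra
variable {K : Type*} [Field K]

/-- Coefficientwise action of a polynomial on a formal distribution. -/
def conv (P : Polynomial K) (a : ℤ → K) : ℤ → K :=
  fun j => ∑ k ∈ P.support, P.coeff k * a (j - k)

lemma conv_eq_sum (P : Polynomial K) {s : Finset ℕ} (hs : P.support ⊆ s) (a : ℤ → K) (j : ℤ) :
    conv P a j = ∑ k ∈ s, P.coeff k * a (j - k) :=
  Finset.sum_subset hs (fun k _ hk => by
    rw [Polynomial.notMem_support_iff.mp hk, zero_mul])

lemma conv_add (P Q : Polynomial K) (a : ℤ → K) (j : ℤ) :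
    conv (P + Q) a j = conv P a j + conv Q a j := by
  rw [conv_eq_sum (P + Q) (s := P.support ∪ Q.support) (Polynomial.support_add) a j,
      conv_eq_sum P Finset.subset_union_left a j,
      conv_eq_sum Q Finset.subset_union_right a j, ← Finset.sum_add_distrib]
  exact Finset.sum_congr rfl fun k _ => by rw [Polynomial.coeff_add, add_mul]

lemma conv_monomial (n : ℕ) (c : K) (a : ℤ → K) (j : ℤ) :
    conv (Polynomial.monomial n c) a j = c * a (j - n) := by
  rw [conv_eq_sum _ (Polynomial.support_monomial' n c) a j, Finset.sum_singleton,
      Polynomial.coeff_monomial, if_pos rfl]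

lemma conv_smul (P : Polynomial K) (t : K) (a : ℤ → K) (j : ℤ) :
    conv P (fun m => t * a m) j = t * conv P a j := by
  unfold conv; rw [Finset.mul_sum]; exact Finset.sum_congr rfl fun k _ => by ring

lemma conv_sub (P : Polynomial K) (a b : ℤ → K) (j : ℤ) :
    conv P (fun m => a m - b m) j = conv P a j - conv P b j := by
  unfold conv; rw [← Finset.sum_sub_distrib]; exact Finset.sum_congr rfl fun k _ => by ring

lemma conv_zero_fun (P : Polynomial K) (j : ℤ) : conv P (fun _ => (0 : K)) j = 0 := by
  unfold conv; simp

lemma conv_fun_sum {ι : Type*} (P : Polynomial K) (s : Finset ι) (F : ι → ℤ → K) (j : ℤ) :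
    conv P (fun m => ∑ i ∈ s, F i m) j = ∑ i ∈ s, conv P (F i) j := by
  unfold conv
  simp_rw [Finset.mul_sum]
  rw [Finset.sum_comm]

lemma conv_mul (P Q : Polynomial K) (a : ℤ → K) (j : ℤ) :
    conv (P * Q) a j = conv P (conv Q a) j := by
  induction P using Polynomial.induction_on' generalizing j with
  | add p q hp hq => rw [add_mul, conv_add, conv_add, hp, hq]
  | monomial n cc =>
    rw [conv_monomial]
    induction Q using Polynomial.induction_on' generalizing j with
    | add p q hp hq =>
      rw [mul_add, conv_add, hp, hq, conv_add, mul_add]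
    | monomial m d =>
      rw [Polynomial.monomial_mul_monomial, conv_monomial, conv_monomial]
      have h : j - ((n + m : ℕ) : ℤ) = j - (n : ℤ) - (m : ℤ) := by push_cast; ring
      rw [h, mul_assoc]

lemma conv_one (a : ℤ → K) (j : ℤ) : conv 1 a j = a j := by
  have h : (1 : Polynomial K) = Polynomial.monomial 0 1 := by simp
  rw [h, conv_monomial]; simp

/-- shift operator: coefficients of `(z-λ)·a(z)` -/
def Sh (lam : K) (a : ℤ → K) : ℤ → K := fun j => a (j - 1) - lam * a j

lemma conv_X_sub_C (lam : K) (a : ℤ → K) (j : ℤ) :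
    conv (Polynomial.X - Polynomial.C lam) a j = Sh lam a j := by
  have h : Polynomial.X - Polynomial.C lam =
      Polynomial.monomial 1 1 + Polynomial.monomial 0 (-lam) := by
    simp [Polynomial.monomial_one_one_eq_X, sub_eq_add_neg]
  rw [h, conv_add, conv_monomial, conv_monomial]
  simp [Sh]
  ring

lemma Sh_comm (lam : K) (b : ℤ → K) (j : ℤ) :
    Sh lam (Dop b) j = Dop (Sh lam b) j - b j := by
  simp only [Sh, Dop]
  have h1 : j - 1 + 1 = j := by ring
  have h2 : j + 1 - 1 = j := by ring
  rw [h1, h2]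
  push_cast
  ring

lemma Dop_sub_smul (u v : ℤ → K) (t : K) (j : ℤ) :
    Dop (fun m => u m - t * v m) j = Dop u j - t * Dop v j := by
  unfold Dop; ring

lemma Sh_iter (lam : K) (b : ℤ → K) :
    ∀ p : ℕ, ∀ j, Sh lam (Dop^[p + 1] b) j =
      Dop^[p + 1] (Sh lam b) j - ((p + 1 : ℕ) : K) * Dop^[p] b j := by
  intro p
  induction p with
  | zero => intro j; simpa using Sh_comm lam b j
  | succ p ih =>
    intro j
    rw [Function.iterate_succ_apply' Dop (p + 1) b]
    rw [Sh_comm]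
    have : Sh lam (Dop^[p + 1] b) =
        fun m => Dop^[p + 1] (Sh lam b) m - ((p + 1 : ℕ) : K) * Dop^[p] b m := funext ih
    rw [this, Dop_sub_smul]
    rw [← Function.iterate_succ_apply' Dop (p + 1) (Sh lam b),
        ← Function.iterate_succ_apply' Dop p b]
    push_cast
    ring

lemma Dop_zero : Dop (fun _ => (0 : K)) = fun _ => 0 := by
  funext j; simp [Dop]

lemma Dop_iter_zero : ∀ p : ℕ, ∀ j : ℤ, Dop^[p] (fun _ => (0 : K)) j = 0 := by
  intro p
  induction p with
  | zero => intro j; simp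
  | succ p ih =>
    intro j
    rw [Function.iterate_succ_apply, Dop_zero, ih]

lemma Sh_delta {lam : K} (hl : lam ≠ 0) (j : ℤ) :
    Sh lam (fun m : ℤ => lam ^ (-m)) j = 0 := by
  simp only [Sh]
  have h : -(j - 1) = 1 + -j := by ring
  rw [h, zpow_add₀ hl, zpow_one]
  ring

lemma Sh_iter_delta {lam : K} (hl : lam ≠ 0) (p : ℕ) (j : ℤ) :
    Sh lam (Dop^[p + 1] (fun m : ℤ => lam ^ (-m))) j =
      -((p + 1 : ℕ) : K) * Dop^[p] (fun m : ℤ => lam ^ (-m)) j := by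
  rw [Sh_iter]
  have : Sh lam (fun m : ℤ => lam ^ (-m)) = fun _ => (0 : K) := funext (Sh_delta hl)
  rw [this, Dop_iter_zero]
  ring

/-- `(X - C λ)^{p+1}` annihilates the `p`-th derivative of delta. -/
lemma conv_pow_succ_delta {lam : K} (hl : lam ≠ 0) :
    ∀ p : ℕ, ∀ j : ℤ,
      conv ((Polynomial.X - Polynomial.C lam) ^ (p + 1))
        (Dop^[p] (fun m : ℤ => lam ^ (-m))) j = 0 := by
  intro p
  induction p with
  | zero =>
    intro j
    rw [pow_one, conv_X_sub_C]
    simpa using Sh_delta hl j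
  | succ p ih =>
    intro j
    rw [pow_succ, conv_mul]
    have h1 : conv (Polynomial.X - Polynomial.C lam)
        (Dop^[p + 1] (fun m : ℤ => lam ^ (-m))) =
        fun m => -((p + 1 : ℕ) : K) * Dop^[p] (fun m : ℤ => lam ^ (-m)) m := by
      funext m
      rw [conv_X_sub_C]
      exact Sh_iter_delta hl p m
    rw [h1, conv_smul, ih, mul_zero]

/-- `(X - C λ)^p` maps the `p`-th derivative of delta to `(-1)^p p!` times delta. -/
lemma conv_pow_delta {lam : K} (hl : lam ≠ 0) :
    ∀ p : ℕ, ∀ j : ℤ,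
      conv ((Polynomial.X - Polynomial.C lam) ^ p)
        (Dop^[p] (fun m : ℤ => lam ^ (-m))) j =
      ((-1 : K) ^ p * (p.factorial : K)) * lam ^ (-j) := by
  intro p
  induction p with
  | zero => intro j; simp [conv_one]
  | succ p ih =>
    intro j
    rw [pow_succ, conv_mul]
    have h1 : conv (Polynomial.X - Polynomial.C lam)
        (Dop^[p + 1] (fun m : ℤ => lam ^ (-m))) =
        fun m => -((p + 1 : ℕ) : K) * Dop^[p] (fun m : ℤ => lam ^ (-m)) m := by
      funext m
      rw [conv_X_sub_C]
      exact Sh_iter_delta hl p m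
    rw [h1, conv_smul, ih, Nat.factorial_succ]
    push_cast
    ring

lemma conv_delta (R : Polynomial K) {lam : K} (hl : lam ≠ 0) (j : ℤ) :
    conv R (fun m : ℤ => lam ^ (-m)) j = R.eval lam * lam ^ (-j) := by
  unfold conv
  rw [Polynomial.eval_eq_sum, Polynomial.sum_def, Finset.sum_mul]
  refine Finset.sum_congr rfl fun k _ => ?_
  show R.coeff k * lam ^ (-(j - (k:ℤ))) = R.coeff k * lam ^ k * lam ^ (-j)
  have h : -(j - (k : ℤ)) = (k : ℤ) + -j := by ring
  rw [h, zpow_add₀ hl, zpow_natCast]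
  ring

lemma sh_sol {lam : K} (hl : lam ≠ 0) (a : ℤ → K)
    (h : ∀ j, Sh lam a j = 0) : ∀ j, a j = a 0 * lam ^ (-j) := by
  have key : ∀ j : ℤ, a (j - 1) = lam * a j := fun j => by
    have := h j
    simp only [Sh] at this
    linear_combination this
  intro j
  induction j using Int.induction_on with
  | zero => simp
  | succ k ih =>
    have h1 : a ((k : ℤ) + 1 - 1) = lam * a (k + 1) := key _
    simp only [add_sub_cancel_right] at h1
    have h2 : a ((k : ℤ) + 1) = lam⁻¹ * a k := by
      field_simp at h1 ⊢
      rw [h1]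
    rw [h2, ih]
    rw [show -((k : ℤ) + 1) = -1 + -(k : ℤ) by ring, zpow_add₀ hl, zpow_neg_one]
    ring
  | pred k ih =>
    have h1 : a (-(k : ℤ) - 1) = lam * a (-k) := key _
    rw [h1, ih]
    rw [show -(-(k : ℤ) - 1) = 1 + -(-(k:ℤ)) by ring, zpow_add₀ hl, zpow_one]
    ring

end Infra

lemma backward {K : Type*} [Field K] {n : ℕ} (lam : Fin n → K) (mult : Fin n → ℕ) (c : K)
    (hne : ∀ i, lam i ≠ 0) (α : Fin n → ℕ → K) (j : ℤ) :
    conv (Polynomial.C c * ∏ i, (Polynomial.X - Polynomial.C (lam i)) ^ mult i)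
      (fun m => ∑ i, ∑ p ∈ Finset.range (mult i),
        α i p * (Dop^[p] (fun m' : ℤ => lam i ^ (-m'))) m) j = 0 := by
  rw [conv_fun_sum]
  refine Finset.sum_eq_zero fun i _ => ?_
  rw [conv_fun_sum]
  refine Finset.sum_eq_zero fun p hp => ?_
  rw [conv_smul]
  have hple : p + 1 ≤ mult i := Finset.mem_range.mp hp
  obtain ⟨q, hq⟩ : ∃ q, mult i = q + (p + 1) := ⟨mult i - (p + 1), (Nat.sub_add_cancel hple).symm⟩
  have hfac : Polynomial.C c * ∏ i', (Polynomial.X - Polynomial.C (lam i')) ^ mult i' =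
      (Polynomial.C c * (Polynomial.X - Polynomial.C (lam i)) ^ q *
        ∏ i' ∈ Finset.univ.erase i, (Polynomial.X - Polynomial.C (lam i')) ^ mult i')
        * (Polynomial.X - Polynomial.C (lam i)) ^ (p + 1) := by
    rw [← Finset.mul_prod_erase Finset.univ _ (Finset.mem_univ i), hq, pow_add]
    ring
  rw [hfac, conv_mul]
  have h0 : conv ((Polynomial.X - Polynomial.C (lam i)) ^ (p + 1))
      (Dop^[p] fun m' : ℤ => lam i ^ (-m')) = fun _ => 0 :=
    funext (conv_pow_succ_delta (hne i) p)
  rw [h0, conv_zero_fun, mul_zero]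

lemma forward {K : Type*} [Field K] [CharZero K] :
    ∀ (N n : ℕ) (lam : Fin n → K) (mult : Fin n → ℕ) (c : K),
      c ≠ 0 → Function.Injective lam → (∀ i, lam i ≠ 0) → (∑ i, mult i) = N →
      ∀ a : ℤ → K,
        (∀ j, conv (Polynomial.C c * ∏ i, (Polynomial.X - Polynomial.C (lam i)) ^ mult i) a j = 0) →
        ∃ α : Fin n → ℕ → K,
          a = fun j => ∑ i, ∑ p ∈ Finset.range (mult i),
            α i p * (Dop^[p] (fun m : ℤ => lam i ^ (-m))) j := by
  intro N
  induction N with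
  | zero =>
    intro n lam mult c hc hinj hne hsum a ha
    have hm : ∀ i, mult i = 0 := fun i => by
      have := Finset.sum_eq_zero_iff.mp hsum i (Finset.mem_univ i)
      exact this
    refine ⟨fun _ _ => 0, ?_⟩
    funext j
    have h0 : (Polynomial.C c * ∏ i, (Polynomial.X - Polynomial.C (lam i)) ^ mult i)
        = Polynomial.C c := by simp [hm]
    have hCc : conv (Polynomial.C c) a j = c * a j := by
      rw [show (Polynomial.C c : Polynomial K) = Polynomial.monomial 0 c by simp,
        conv_monomial]
      simp
    have := ha j
    rw [h0, hCc] at this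
    have haj : a j = 0 := by
      rcases mul_eq_zero.mp this with h | h
      · exact absurd h hc
      · exact h
    rw [haj]
    simp [hm]
  | succ N IH =>
    intro n lam mult c hc hinj hne hsum a ha
    obtain ⟨i0, -, hi0⟩ : ∃ i0 ∈ Finset.univ, mult i0 ≠ 0 :=
      Finset.exists_ne_zero_of_sum_ne_zero (by rw [hsum]; exact Nat.succ_ne_zero N)
    obtain ⟨p0, hm0⟩ : ∃ p0, mult i0 = p0 + 1 :=
      ⟨mult i0 - 1, (Nat.succ_pred_eq_of_pos (Nat.pos_of_ne_zero hi0)).symm⟩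
    set mult' := Function.update mult i0 p0 with hmult'
    set Prest : Polynomial K :=
      ∏ i ∈ Finset.univ.erase i0, (Polynomial.X - Polynomial.C (lam i)) ^ mult i with hPrest
    set R : Polynomial K := Polynomial.C c * Prest with hR
    set Q : Polynomial K :=
      Polynomial.C c * ∏ i, (Polynomial.X - Polynomial.C (lam i)) ^ mult' i with hQ
    have hprod' : ∏ i, (Polynomial.X - Polynomial.C (lam i)) ^ mult' i
        = (Polynomial.X - Polynomial.C (lam i0)) ^ p0 * Prest := by
      rw [← Finset.mul_prod_erase Finset.univ _ (Finset.mem_univ i0)]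
      rw [hmult', Function.update_self]
      congr 1
      exact Finset.prod_congr rfl fun i hi => by
        rw [Function.update_of_ne (Finset.ne_of_mem_erase hi)]
    have hPQ : Polynomial.C c * ∏ i, (Polynomial.X - Polynomial.C (lam i)) ^ mult i
        = (Polynomial.X - Polynomial.C (lam i0)) * Q := by
      rw [hQ, hprod', ← Finset.mul_prod_erase Finset.univ _ (Finset.mem_univ i0), hm0, pow_succ]
      ring
    have hQR : Q = R * (Polynomial.X - Polynomial.C (lam i0)) ^ p0 := by
      rw [hQ, hprod', hR]; ring
    -- b := conv Q a  satisfies Sh (lam i0) b = 0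
    have hb : ∀ j, Sh (lam i0) (conv Q a) j = 0 := by
      intro j
      rw [← conv_X_sub_C, ← conv_mul, ← hPQ]
      exact ha j
    have hbeta : ∀ j, conv Q a j = conv Q a 0 * lam i0 ^ (-j) :=
      sh_sol (hne i0) _ hb
    -- conv Q of the p0-th delta derivative
    have hQf : ∀ j, conv Q (Dop^[p0] (fun m : ℤ => lam i0 ^ (-m))) j
        = ((-1:K) ^ p0 * (p0.factorial : K) * R.eval (lam i0)) * lam i0 ^ (-j) := by
      intro j
      rw [hQR, conv_mul]
      have h2 : conv ((Polynomial.X - Polynomial.C (lam i0)) ^ p0)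
          (Dop^[p0] fun m : ℤ => lam i0 ^ (-m)) =
          fun m => ((-1:K) ^ p0 * (p0.factorial : K)) * lam i0 ^ (-m) :=
        funext (conv_pow_delta (hne i0) p0)
      rw [h2, conv_smul, conv_delta R (hne i0)]
      ring
    have hevalR : R.eval (lam i0) ≠ 0 := by
      rw [hR, hPrest]
      simp only [Polynomial.eval_mul, Polynomial.eval_C, Polynomial.eval_prod,
        Polynomial.eval_pow, Polynomial.eval_sub, Polynomial.eval_X]
      refine mul_ne_zero hc (Finset.prod_ne_zero_iff.mpr fun i hi => ?_)
      exact pow_ne_zero _ (sub_ne_zero.mpr fun h => (Finset.ne_of_mem_erase hi) (hinj h).symm)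
    set D : K := (-1:K) ^ p0 * (p0.factorial : K) * R.eval (lam i0) with hD
    have hDne : D ≠ 0 := by
      refine mul_ne_zero (mul_ne_zero (pow_ne_zero _ ?_) ?_) hevalR
      · exact neg_ne_zero.mpr one_ne_zero
      · exact_mod_cast Nat.cast_ne_zero.mpr (Nat.factorial_ne_zero p0)
    set γ : K := conv Q a 0 / D with hγ
    set a' : ℤ → K := fun m => a m - γ * Dop^[p0] (fun m' : ℤ => lam i0 ^ (-m')) m with ha'def
    have ha' : ∀ j, conv Q a' j = 0 := by
      intro j
      rw [ha'def, conv_sub, conv_smul, hQf, hbeta j, hγ]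
      field_simp
      ring
    have hsum' : ∑ i, mult' i = N := by
      rw [hmult', Finset.sum_update_of_mem (Finset.mem_univ i0),
        Finset.sdiff_singleton_eq_erase]
      have hs : mult i0 + ∑ i ∈ Finset.univ.erase i0, mult i = N + 1 := by
        rw [Finset.add_sum_erase _ _ (Finset.mem_univ i0)]; exact hsum
      omega
    obtain ⟨α', hα'⟩ := IH n lam mult' c hc hinj hne hsum' a' ha'
    refine ⟨fun i p => (if p < mult' i then α' i p else 0) +
      (if i = i0 ∧ p = p0 then γ else 0), ?_⟩
    funext j
    have haj : a j = a' j + γ * Dop^[p0] (fun m' : ℤ => lam i0 ^ (-m')) j := by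
      rw [ha'def]; ring
    rw [haj, congrFun hα' j]
    have hle : ∀ i, mult' i ≤ mult i := by
      intro i
      rw [hmult']
      by_cases h : i = i0
      · subst h; rw [Function.update_self]; omega
      · rw [Function.update_of_ne h]
    have h1 : ∀ i : Fin n, ∑ p ∈ Finset.range (mult i),
        (if p < mult' i then α' i p else 0) * (Dop^[p] (fun m : ℤ => lam i ^ (-m))) j
        = ∑ p ∈ Finset.range (mult' i),
          α' i p * (Dop^[p] (fun m : ℤ => lam i ^ (-m))) j := by
      intro i
      rw [← Finset.sum_subset (Finset.range_subset_range.mpr (hle i))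
        (fun p _ hp => by rw [if_neg (by simpa using hp), zero_mul])]
      exact Finset.sum_congr rfl fun p hp => by rw [if_pos (Finset.mem_range.mp hp)]
    have h2 : ∑ i : Fin n, ∑ p ∈ Finset.range (mult i),
        (if i = i0 ∧ p = p0 then γ else 0) * (Dop^[p] (fun m : ℤ => lam i ^ (-m))) j
        = γ * Dop^[p0] (fun m' : ℤ => lam i0 ^ (-m')) j := by
      rw [Finset.sum_eq_single_of_mem i0 (Finset.mem_univ i0)
        (fun i _ hi => Finset.sum_eq_zero fun p _ => by
          rw [if_neg (by tauto), zero_mul])]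
      rw [Finset.sum_eq_single_of_mem p0 (Finset.mem_range.mpr (by omega))
        (fun p _ hp => by rw [if_neg (by tauto), zero_mul])]
      rw [if_pos ⟨rfl, rfl⟩]
    simp_rw [add_mul, Finset.sum_add_distrib]
    rw [h2]
    congr 1
    exact (Finset.sum_congr rfl fun i _ => h1 i).symm

/-- Let `K` be algebraically closed of characteristic 0 and let
`P(z) = c ∏ᵢ (z - λᵢ)^{mᵢ}` be a nonzero polynomial with distinct nonzero roots `λᵢ` of
multiplicities `mᵢ ≥ 1`.  A formal distribution `a(z) = Σ_{j∈ℤ} a_j z^j ∈ K[[z,z⁻¹]]`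
satisfies `P(z)·a(z) = 0` (coefficientwise) if and only if
`a(z) = Σᵢ Σ_{p=0}^{mᵢ-1} αᵢₚ δ^{(p)}(z/λᵢ)` for some scalars `αᵢₚ ∈ K`,
where `δ(z/λ) = Σ_{m∈ℤ} λ^{-m} z^m`. -/
theorem stmt7 {K : Type*} [Field K] [IsAlgClosed K] [CharZero K]
    (n : ℕ) (lam : Fin n → K) (mult : Fin n → ℕ) (c : K)
    (hc : c ≠ 0) (hinj : Function.Injective lam) (hne : ∀ i, lam i ≠ 0)
    (hmult : ∀ i, 1 ≤ mult i)
    (P : Polynomial K)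
    (hP : P = Polynomial.C c * ∏ i, (Polynomial.X - Polynomial.C (lam i)) ^ mult i)
    (a : ℤ → K) :
    (∀ j : ℤ, ∑ k ∈ P.support, P.coeff k * a (j - k) = 0) ↔
      ∃ α : Fin n → ℕ → K,
        a = fun j => ∑ i, ∑ p ∈ Finset.range (mult i),
          α i p * (Dop^[p] (fun m : ℤ => lam i ^ (-m))) j := by
  have hconv : ∀ b : ℤ → K, (∀ j : ℤ, ∑ k ∈ P.support, P.coeff k * b (j - k) = 0)
      ↔ (∀ j, conv P b j = 0) := fun b => Iff.rfl
  rw [hconv]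
  constructor
  · intro h
    refine forward (∑ i, mult i) n lam mult c hc hinj hne rfl a ?_
    intro j
    rw [← hP]
    exact h j
  · rintro ⟨α, rfl⟩ j
    have h := backward lam mult c hne α j
    rw [← hP] at h
    exact h
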